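/- The intersection axiom holds for strictly positive distributions: if P is strictly positive and X ⊥⊥ Y | (Z ∪ W) and X ⊥⊥ W | (Z ∪ Y) for disjoint sets of variables, then X ⊥⊥ (Y ∪ W) | Z. -/

import Mathlib

open Finset

/-!
Fix the value `c` of `Z` and write `q(a, b, d)` for the slice of `p` at `c`. By positivity,
`X ⊥⊥ Y | (Z ∪ W)` says that `q(a, b, d) / ∑ₐ q(·, b, d)` does not depend on `b`, and
`X ⊥⊥ W | (Z ∪ Y)` says that it does not depend on `d`. Hence it is a function `g(a)` alone, so
`q(a, b, d) = g(a) · ∑ₐ q(·, b, d)`, which is the factorization `X ⊥⊥ (Y ∪ W) | Z`.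
-/

section IndepTable

variable {α κ : Type*} [Fintype α] [Fintype κ]

def IsIndepTable (f : α → κ → ℝ) : Prop :=
  ∀ a k, f a k / (∑ a', ∑ k', f a' k') =
    ((∑ k', f a k') / (∑ a', ∑ k', f a' k')) * ((∑ a', f a' k) / (∑ a', ∑ k', f a' k'))

theorem div_eq_div_mul_div_iff {K : Type*} [Field K] {x y z t : K} (hz : z ≠ 0) (ht : t ≠ 0) :
    x / t = y / t * (z / t) ↔ x / z = y / t := by
  rw [div_mul_div_comm, div_eq_div_iff ht (mul_ne_zero ht ht), div_eq_div_iff hz ht]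
  constructor
  · intro h
    exact mul_right_cancel₀ ht (by linear_combination h)
  · intro h
    linear_combination t * h

variable {f : α → κ → ℝ}

theorem sum_sum_pos (hf : ∀ a k, 0 < f a k) (a : α) (k : κ) : 0 < ∑ a', ∑ k', f a' k' :=
  sum_pos (fun a' _ => sum_pos (fun k' _ => hf a' k') ⟨k, mem_univ k⟩) ⟨a, mem_univ a⟩

theorem div_colSum_eq_of_isIndepTable (hf : ∀ a k, 0 < f a k) (h : IsIndepTable f) (a : α)
    (k : κ) : f a k / ∑ a', f a' k = (∑ k', f a k') / ∑ a', ∑ k', f a' k' :=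
  (div_eq_div_mul_div_iff (sum_pos (fun a' _ => hf a' k) ⟨a, mem_univ a⟩).ne'
    (sum_sum_pos hf a k).ne').mp (h a k)

theorem isIndepTable_of_div_colSum_eq (hf : ∀ a k, 0 < f a k) {g : α → ℝ}
    (hg : ∀ a k, f a k / ∑ a', f a' k = g a) : IsIndepTable f := by
  intro a k
  have hcol : ∀ k, ∑ a', f a' k ≠ 0 := fun k => (sum_pos (fun a' _ => hf a' k) ⟨a, mem_univ a⟩).ne'
  have hfac : ∀ a k, f a k = g a * ∑ a', f a' k := fun a k => by
    rw [← hg a k, div_mul_cancel₀ _ (hcol k)]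
  have hrow : ∑ k', f a k' = g a * ∑ a', ∑ k', f a' k' := by
    rw [sum_comm, mul_sum]
    exact sum_congr rfl fun k' _ => hfac a k'
  rw [div_eq_div_mul_div_iff (hcol k) (sum_sum_pos hf a k).ne', hg, hrow,
    mul_div_cancel_right₀ _ (sum_sum_pos hf a k).ne']

end IndepTable

theorem graphoid_intersection_general
    {A B C D : Type*} [Fintype A] [Fintype B] [Fintype C] [Fintype D]
    (p : A → B → C → D → ℝ)
    (hpos : ∀ a b c d, 0 < p a b c d)
    -- X ⊥⊥ Y | (Z ∪ W)
    (h1 : ∀ a b c d,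
      p a b c d / (∑ a', ∑ b', p a' b' c d) =
        ((∑ b', p a b' c d) / (∑ a', ∑ b', p a' b' c d)) *
        ((∑ a', p a' b c d) / (∑ a', ∑ b', p a' b' c d)))
    -- X ⊥⊥ W | (Z ∪ Y)
    (h2 : ∀ a b c d,
      p a b c d / (∑ a', ∑ d', p a' b c d') =
        ((∑ d', p a b c d') / (∑ a', ∑ d', p a' b c d')) *
        ((∑ a', p a' b c d) / (∑ a', ∑ d', p a' b c d'))) :
    -- X ⊥⊥ (Y ∪ W) | Z
    ∀ a b c d,
      p a b c d / (∑ a', ∑ b', ∑ d', p a' b' c d') =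
        ((∑ b', ∑ d', p a b' c d') / (∑ a', ∑ b', ∑ d', p a' b' c d')) *
        ((∑ a', p a' b c d) / (∑ a', ∑ b', ∑ d', p a' b' c d')) := by
  intro a b c d
  have hXY : ∀ a b d, p a b c d / ∑ a', p a' b c d =
      (∑ b', p a b' c d) / ∑ a', ∑ b', p a' b' c d := fun a b d =>
    div_colSum_eq_of_isIndepTable (fun a b => hpos a b c d) (fun a b => h1 a b c d) a b
  have hXW : ∀ a b d, p a b c d / ∑ a', p a' b c d =
      (∑ d', p a b c d') / ∑ a', ∑ d', p a' b c d' := fun a b d =>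
    div_colSum_eq_of_isIndepTable (f := fun a d => p a b c d) (fun a d => hpos a b c d)
      (fun a d => h2 a b c d) a d
  have hratio : ∀ a' b' d', p a' b' c d' / ∑ a'', p a'' b' c d' =
      p a' b c d / ∑ a'', p a'' b c d := by
    intro a' b' d'
    rw [hXY a' b' d', ← hXY a' b d', hXW, ← hXW]
  have hYW := isIndepTable_of_div_colSum_eq (f := fun a (x : B × D) => p a x.1 c x.2)
    (fun a x => hpos a x.1 c x.2) (fun a' x => hratio a' x.1 x.2) a (b, d)
  simpa only [Fintype.sum_prod_type] using hYW

/-- Intersection axiom for strictly positive distributions.  Variables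
X, Y, Z, W take values in finite types `A`, `B`, `C`, `D`, with strictly
positive joint distribution `p`.  If `X ⊥⊥ Y | (Z ∪ W)` and `X ⊥⊥ W | (Z ∪ Y)`
then `X ⊥⊥ (Y ∪ W) | Z`. -/
theorem graphoid_intersection
    {A B C D : Type*} [Fintype A] [Fintype B] [Fintype C] [Fintype D]
    [Nonempty A] [Nonempty B] [Nonempty C] [Nonempty D]
    (p : A → B → C → D → ℝ)
    (hpos : ∀ a b c d, 0 < p a b c d)
    (hp1 : ∑ a, ∑ b, ∑ c, ∑ d, p a b c d = 1)
    -- X ⊥⊥ Y | (Z ∪ W)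
    (h1 : ∀ a b c d,
      p a b c d / (∑ a', ∑ b', p a' b' c d) =
        ((∑ b', p a b' c d) / (∑ a', ∑ b', p a' b' c d)) *
        ((∑ a', p a' b c d) / (∑ a', ∑ b', p a' b' c d)))
    -- X ⊥⊥ W | (Z ∪ Y)
    (h2 : ∀ a b c d,
      p a b c d / (∑ a', ∑ d', p a' b c d') =
        ((∑ d', p a b c d') / (∑ a', ∑ d', p a' b c d')) *
        ((∑ a', p a' b c d) / (∑ a', ∑ d', p a' b c d'))) :
    -- X ⊥⊥ (Y ∪ W) | Z
    ∀ a b c d,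
      p a b c d / (∑ a', ∑ b', ∑ d', p a' b' c d') =
        ((∑ b', ∑ d', p a b' c d') / (∑ a', ∑ b', ∑ d', p a' b' c d')) *
        ((∑ a', p a' b c d) / (∑ a', ∑ b', ∑ d', p a' b' c d')) :=
  graphoid_intersection_general p hpos h1 h2
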